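/- arXiv:1402.2712 — 4 statements merged into one kernel-verified Lean document; each statement's English description precedes it below -/
import Mathlib

section
/- Every non-nil full balanced binary tree t satisfies (Tree.numLeaves t : ℝ) ≥ φ^(Tree.height t − 1). -/
/-- The golden ratio `(1 + √5)/2`. -/
noncomputable def goldenRatioReal : ℝ := (1 + Real.sqrt 5) / 2

/-- A binary tree is full if every node has either both subtrees nil or both non-nil. -/
def IsFullTree {α : Type*} : Tree α → Prop
  | BinaryTree.nil => True
  | BinaryTree.node _ l r =>
      ((l = Tree.nil ∧ r = Tree.nil) ∨ (l ≠ Tree.nil ∧ r ≠ Tree.nil)) ∧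
      IsFullTree l ∧ IsFullTree r

/-- A binary tree is balanced if at every node the heights of the two subtrees
differ by at most 1. -/
def IsBalancedTree {α : Type*} : Tree α → Prop
  | BinaryTree.nil => True
  | BinaryTree.node _ l r =>
      (Tree.height l ≤ Tree.height r + 1 ∧ Tree.height r ≤ Tree.height l + 1) ∧
      IsBalancedTree l ∧ IsBalancedTree r

/-!
`BinaryTree.numLeaves` counts the `nil` positions, so it is additive over the two subtrees of a
node. For a balanced node with subtrees of heights `m` and `n`, `|m - n| ≤ 1`, the Fibonacci-type
inequality `φ ^ (max m n + 1) ≤ φ ^ m + φ ^ n` (from `φ ≤ 2` and `φ ^ 2 = φ + 1`) lets the bound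
`φ ^ height ≤ numLeaves` pass by induction from the subtrees to the node.
-/

open Real

open scoped goldenRatio

theorem goldenRatio_pow_max_succ_le_add {m n : ℕ} (hmn : m ≤ n + 1) (hnm : n ≤ m + 1) :
    φ ^ (max m n + 1) ≤ φ ^ m + φ ^ n := by
  wlog hle : m ≤ n generalizing m n
  · rw [max_comm, add_comm (φ ^ m)]
    exact this hnm hmn (le_of_not_ge hle)
  rw [max_eq_right hle]
  obtain rfl | rfl : m = n ∨ n = m + 1 := by omega
  · calc φ ^ (m + 1) = φ ^ m * φ := pow_succ φ m
      _ ≤ φ ^ m * 2 := by gcongr; exact goldenRatio_lt_two.le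
      _ = φ ^ m + φ ^ m := by ring
  · have := goldenRatio_pow_sub_goldenRatio_pow m
    linarith

theorem goldenRatio_pow_height_le_numLeaves {α : Type*} {t : BinaryTree α}
    (ht : IsBalancedTree t) : φ ^ t.height ≤ t.numLeaves := by
  induction t with
  | nil => simp
  | node _ l r ihl ihr =>
    obtain ⟨⟨hlr, hrl⟩, hl, hr⟩ := ht
    calc φ ^ (max l.height r.height + 1) ≤ φ ^ l.height + φ ^ r.height :=
          goldenRatio_pow_max_succ_le_add hlr hrl
      _ ≤ l.numLeaves + r.numLeaves := add_le_add (ihl hl) (ihr hr)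
      _ = (l.node _ r).numLeaves := (Nat.cast_add _ _).symm

theorem numLeaves_ge_goldenRatio_pow_height_general {α : Type*} (t : Tree α)
    (hbal : IsBalancedTree t) :
    (Tree.numLeaves t : ℝ) ≥ goldenRatioReal ^ (Tree.height t - 1) :=
  calc φ ^ (t.height - 1) ≤ φ ^ t.height :=
        pow_le_pow_right₀ one_lt_goldenRatio.le (Nat.sub_le _ _)
    _ ≤ t.numLeaves := goldenRatio_pow_height_le_numLeaves hbal

/-- Every non-nil full balanced binary tree `t` satisfies
`(Tree.numLeaves t : ℝ) ≥ φ ^ (Tree.height t - 1)`. -/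
theorem numLeaves_ge_goldenRatio_pow_height {α : Type*} (t : Tree α)
    (hne : t ≠ Tree.nil) (hfull : IsFullTree t) (hbal : IsBalancedTree t) :
    (Tree.numLeaves t : ℝ) ≥ goldenRatioReal ^ (Tree.height t - 1) :=
  numLeaves_ge_goldenRatio_pow_height_general t hbal
end

section
/- For every real b > e^(1/e) and every real x, there exists i ∈ ℕ such that log_b^[i](x) ≤ 1. In particular, the set {i ∈ ℕ : log_b^[i](x) ≤ 1} is nonempty, so the iterated logarithm log*_b(x) is well defined. -/
/-!
Write `c = log b`. The tangent-line bound `log (c y) ≤ c y - 1` gives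
`log_b y ≤ y - δ` for all `y > 0`, with `δ = (1 + log c) / c`, and `δ > 0` exactly
when `c > 1 / e`, i.e. `b > e^(1/e)`. So while the iterates stay above `1` they drop
by at least `δ` at each step, which cannot go on forever.
-/

open Real

theorem Function.exists_iterate_le_of_le_sub {α : Type*} [Field α] [LinearOrder α]
    [IsStrictOrderedRing α] [Archimedean α] {f : α → α} {a δ : α} (hδ : 0 < δ)
    (hf : ∀ y, a < y → f y ≤ y - δ) (x : α) : ∃ n : ℕ, f^[n] x ≤ a := by
  by_contra! hgt
  have hdecay : ∀ n : ℕ, f^[n] x ≤ x - n * δ := by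
    intro n
    induction n with
    | zero => simp
    | succ n ih =>
      rw [Function.iterate_succ_apply']
      push_cast
      linarith [hf _ (hgt n)]
  obtain ⟨n, hn⟩ := exists_nat_gt ((x - a) / δ)
  rw [div_lt_iff₀ hδ] at hn
  linarith [hdecay n, hgt n]

theorem Real.logb_le_sub_of_one_lt {b y : ℝ} (hb : 1 < b) (hy : 0 < y) :
    logb b y ≤ y - (1 + log (log b)) / log b := by
  have hc : 0 < log b := log_pos hb
  have htangent : log (log b * y) ≤ log b * y - 1 := log_le_sub_one_of_pos (by positivity)
  rw [log_mul hc.ne' hy.ne'] at htangent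
  rw [logb, div_le_iff₀ hc, sub_mul, div_mul_cancel₀ _ hc.ne']
  linarith

theorem Real.one_add_log_log_pos {b : ℝ} (hb : exp (1 / exp 1) < b) :
    0 < 1 + log (log b) := by
  have hc : 1 / exp 1 < log b := (lt_log_iff_exp_lt ((exp_pos _).trans hb)).2 hb
  have : -1 < log (log b) := by
    rw [lt_log_iff_exp_lt ((one_div_pos.2 (exp_pos 1)).trans hc), exp_neg]
    simpa [one_div] using hc
  linarith

/-- For every real base `b > e^(1/e)` and every real `x`, some iterate of `log_b`
takes `x` to a value at most 1; in particular the set `{i | log_b^[i] x ≤ 1}`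
is nonempty, so the iterated logarithm `log*_b x` is well defined. -/
theorem exists_iterate_logb_le_one (b : ℝ) (hb : Real.exp (1 / Real.exp 1) < b) (x : ℝ) :
    (∃ i : ℕ, (Real.logb b)^[i] x ≤ 1) ∧
      {i : ℕ | (Real.logb b)^[i] x ≤ 1}.Nonempty := by
  have hb1 : 1 < b := lt_trans (one_lt_exp_iff.2 (by positivity)) hb
  have hδ : 0 < (1 + log (log b)) / log b :=
    div_pos (one_add_log_log_pos hb) (log_pos hb1)
  obtain ⟨n, hn⟩ := Function.exists_iterate_le_of_le_sub hδ
    (fun y hy => logb_le_sub_of_one_lt hb1 (one_pos.trans hy)) x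
  exact ⟨⟨n, hn⟩, n, hn⟩
end

section
/- For every real b > 1 and every n ∈ ℕ, log*_b(b↑↑n) = n. (That is, the iterated logarithm with base b is the inverse of the power tower with base b, as asserted in the paper.) -/
/-- The iterated logarithm `log*_b x`: the least `i` such that `log_b^[i] x ≤ 1`. -/
noncomputable def logStar (b x : ℝ) : ℕ := sInf {i : ℕ | (Real.logb b)^[i] x ≤ 1}

/-- The power tower `b ↑↑ n`, defined by `b ↑↑ 0 = 1` and `b ↑↑ (n+1) = b ^ (b ↑↑ n)`
(real exponentiation). -/
noncomputable def powerTower (b : ℝ) : ℕ → ℝ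
  | 0 => 1
  | n + 1 => b ^ powerTower b n

/-! `log_b` peels off one storey of the tower, so `log_b^[i] (b ↑↑ n) = b ↑↑ (n - i)`, which
is `1` for `i = n` and exceeds `1` for `i < n`. -/

theorem logStar_eq_of_iterate_le_of_lt {b x : ℝ} {n : ℕ} (hn : (Real.logb b)^[n] x ≤ 1)
    (hlt : ∀ i < n, 1 < (Real.logb b)^[i] x) : logStar b x = n :=
  le_antisymm (Nat.sInf_le hn)
    (le_csInf ⟨n, hn⟩ fun i hi => not_lt.1 fun hin => (hlt i hin).not_ge hi)

@[simp]
theorem powerTower_zero (b : ℝ) : powerTower b 0 = 1 := rfl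

@[simp]
theorem powerTower_succ (b : ℝ) (n : ℕ) : powerTower b (n + 1) = b ^ powerTower b n := rfl

theorem one_le_powerTower {b : ℝ} (hb : 1 ≤ b) : ∀ n, 1 ≤ powerTower b n
  | 0 => le_rfl
  | n + 1 => Real.one_le_rpow hb (zero_le_one.trans (one_le_powerTower hb n))

theorem one_lt_powerTower_succ {b : ℝ} (hb : 1 < b) (n : ℕ) : 1 < powerTower b (n + 1) :=
  Real.one_lt_rpow hb (zero_lt_one.trans_le (one_le_powerTower hb.le n))

theorem logb_powerTower_succ {b : ℝ} (b_pos : 0 < b) (b_ne_one : b ≠ 1) (n : ℕ) :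
    Real.logb b (powerTower b (n + 1)) = powerTower b n :=
  Real.logb_rpow b_pos b_ne_one

theorem iterate_logb_powerTower_add {b : ℝ} (b_pos : 0 < b) (b_ne_one : b ≠ 1) (n i : ℕ) :
    (Real.logb b)^[i] (powerTower b (n + i)) = powerTower b n := by
  induction i with
  | zero => rfl
  | succ i ih =>
    rw [Function.iterate_succ_apply, ← add_assoc, logb_powerTower_succ b_pos b_ne_one, ih]

/-- The iterated logarithm with base `b > 1` is the inverse of the power tower with
base `b`: `log*_b (b ↑↑ n) = n`. -/
theorem logStar_powerTower (b : ℝ) (hb : 1 < b) (n : ℕ) :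
    logStar b (powerTower b n) = n := by
  have b_pos : 0 < b := zero_lt_one.trans hb
  apply logStar_eq_of_iterate_le_of_lt
  · simpa using (iterate_logb_powerTower_add b_pos hb.ne' 0 n).le
  · intro i hi
    obtain ⟨m, rfl⟩ : ∃ m, n = m + 1 + i := ⟨n - i - 1, by omega⟩
    rw [iterate_logb_powerTower_add b_pos hb.ne']
    exact one_lt_powerTower_succ hb m
end

section
/- Define s : ℕ → ℝ → ℝ by s(0, x) = x and s(i+1, x) = max(log_φ(s(i, x)), 1). Then for every i ∈ ℕ there exists a real x₀ such that for all real x > x₀, the product ∏_{j = i+1}^{log*_φ(x)} s(j, x) is at most s(i, x). -/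
/-- `layerBound i x`: the bound on the maximum size of a layer-`i` team in a layered
tournament tree over a list of `x` elements: `s 0 x = x`,
`s (i+1) x = max (log_φ (s i x)) 1`. -/
noncomputable def layerBound : ℕ → ℝ → ℝ
  | 0, x => x
  | i + 1, x => max (Real.logb goldenRatioReal (layerBound i x)) 1

open Real Filter Finset Asymptotics

lemma three_eighths_le_log_goldenRatio : 3 / 8 ≤ log goldenRatio := by
  rw [le_log_iff_exp_le goldenRatio_pos]
  have h5 : (11 / 5 : ℝ) ≤ √5 := le_sqrt_of_sq_le (by norm_num)
  calc exp (3 / 8) ≤ 1 / (1 - 3 / 8) := exp_bound_div_one_sub_of_interval (by norm_num) (by norm_num)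
    _ ≤ goldenRatio := by rw [goldenRatio]; linarith

lemma log_le_div_exp_one {y : ℝ} (hy : 0 < y) : log y ≤ y / exp 1 := by
  have h := log_le_sub_one_of_pos (div_pos hy (exp_pos 1))
  rw [log_div hy.ne' (exp_pos 1).ne', log_exp] at h
  linarith

lemma logb_goldenRatio_le_sub {y : ℝ} (hy : 1 ≤ y) : logb goldenRatioReal y ≤ y - 1 / 100 := by
  have hφ : 3 / 8 ≤ log goldenRatioReal := three_eighths_le_log_goldenRatio
  have he := exp_one_gt_d9
  have hlog := log_le_div_exp_one (by linarith : 0 < y)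
  have ht : y / exp 1 * exp 1 = y := div_mul_cancel₀ y (exp_pos 1).ne'
  rw [logb, div_le_iff₀ (by linarith)]
  -- `log y ≤ y / e` and `e · log φ > 2.7 · 3/8 > 1`
  nlinarith [div_pos (by linarith : (0 : ℝ) < y) (exp_pos 1)]

lemma eventually_mul_logb_sq_le (b C : ℝ) : ∀ᶠ y in atTop, C * logb b y ^ 2 ≤ y := by
  have hlo : (fun y => C / log b ^ 2 * log y ^ 2) =o[atTop] id :=
    isLittleO_pow_log_id_atTop.const_mul_left _
  filter_upwards [hlo.bound one_pos, eventually_ge_atTop 0] with y hy hy0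
  calc C * logb b y ^ 2 = C / log b ^ 2 * log y ^ 2 := by rw [logb, div_pow]; ring
    _ ≤ ‖C / log b ^ 2 * log y ^ 2‖ := le_norm_self _
    _ ≤ 1 * ‖y‖ := hy
    _ = y := by rw [one_mul, norm_of_nonneg hy0]

lemma layerBound_add (j k : ℕ) (x : ℝ) :
    layerBound (j + k) x = layerBound j (layerBound k x) := by
  induction j with
  | zero => rw [zero_add, layerBound]
  | succ j ih => rw [Nat.add_right_comm, layerBound, ih, layerBound]

lemma prod_Icc_layerBound (m n : ℕ) (x : ℝ) :
    ∏ j ∈ Icc m n, layerBound j x = ∏ k ∈ range (n + 1 - m), layerBound k (layerBound m x) := by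
  rw [← Ico_add_one_right_eq_Icc, prod_Ico_eq_prod_range]
  exact prod_congr rfl fun k _ => by rw [add_comm, layerBound_add]

lemma tendsto_layerBound_atTop (i : ℕ) : Tendsto (layerBound i) atTop atTop := by
  induction i with
  | zero => exact tendsto_id
  | succ i ih =>
    exact tendsto_atTop_mono (fun x => le_max_left _ _)
      ((tendsto_logb_atTop one_lt_goldenRatio).comp ih)

noncomputable def potential (A δ w : ℝ) : ℝ := w ^ 2 * A ^ (min w A / δ)

lemma potential_le_mul_sq {A δ : ℝ} (hδ : 0 < δ) (hA : 1 ≤ A) (w : ℝ) :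
    potential A δ w ≤ A ^ (A / δ) * w ^ 2 := by
  rw [potential, mul_comm]
  gcongr
  exact min_le_right _ _

lemma mul_potential_max_one_le {A δ y w : ℝ} (hδ : 0 < δ) (hA : 1 ≤ A) (hy : 1 ≤ y)
    (hw : w ≤ y - δ) (hsq : A ≤ y → w ^ 2 ≤ y) :
    y * potential A δ (max w 1) ≤ potential A δ y := by
  have hApos : 0 < A := by linarith
  unfold potential
  rcases le_or_gt w 1 with hw1 | hw1
  · rw [max_eq_right hw1, min_eq_left hA]
    have hexp : A ^ (1 / δ) ≤ A ^ (min y A / δ) := by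
      gcongr
      exact le_min hy hA
    rw [one_pow, one_mul]
    exact mul_le_mul (by nlinarith) hexp (by positivity) (by positivity)
  rw [max_eq_left hw1.le]
  rcases lt_or_ge y A with hyA | hAy
  · rw [min_eq_left hyA.le]
    have hexp : A ^ (min w A / δ) ≤ A ^ (y / δ) / A := by
      rw [← rpow_sub_one hApos.ne']
      gcongr
      rw [le_sub_iff_add_le, div_add_one hδ.ne', div_le_div_iff_of_pos_right hδ]
      linarith [min_le_left w A]
    have hw2 : w ^ 2 ≤ y ^ 2 := by nlinarith
    calc y * (w ^ 2 * A ^ (min w A / δ)) ≤ y * (y ^ 2 * (A ^ (y / δ) / A)) := by gcongr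
      _ = y ^ 2 * A ^ (y / δ) * (y / A) := by ring
      _ ≤ y ^ 2 * A ^ (y / δ) * 1 := by gcongr; exact (div_le_one hApos).2 hyA.le
      _ = y ^ 2 * A ^ (y / δ) := mul_one _
  · rw [min_eq_right hAy]
    calc y * (w ^ 2 * A ^ (min w A / δ)) ≤ y * (y * A ^ (A / δ)) := by
          gcongr
          · exact hsq hAy
          · exact min_le_right _ _
      _ = y ^ 2 * A ^ (A / δ) := by ring

lemma prod_range_layerBound_le_potential {A δ : ℝ} (hδ : 0 < δ) (hA : 1 ≤ A)
    (hcontract : ∀ y, 1 ≤ y → logb goldenRatioReal y ≤ y - δ)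
    (hsq : ∀ y, A ≤ y → logb goldenRatioReal y ^ 2 ≤ y) (n : ℕ) {y : ℝ} (hy : 1 ≤ y) :
    ∏ k ∈ range n, layerBound k y ≤ potential A δ y := by
  induction n generalizing y with
  | zero =>
    exact one_le_mul_of_one_le_of_one_le (one_le_pow₀ hy)
      (one_le_rpow hA (div_nonneg (by linarith [le_min hy hA]) hδ.le))
  | succ n ih =>
    rw [prod_range_succ', prod_congr rfl fun k _ => layerBound_add k 1 y]
    calc (∏ k ∈ range n, layerBound k (layerBound 1 y)) * layerBound 0 y
        ≤ potential A δ (layerBound 1 y) * y :=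
          mul_le_mul_of_nonneg_right (ih (le_max_right _ _)) (zero_le_one.trans hy)
      _ = y * potential A δ (max (logb goldenRatioReal y) 1) := mul_comm _ _
      _ ≤ potential A δ y := mul_potential_max_one_le hδ hA hy (hcontract y hy) (hsq y)

/-- For every `i`, eventually in `x` the product of the deeper-layer team-size bounds
`∏_{j = i+1}^{log*_φ x} s j x` is at most the layer-`i` bound `s i x`. -/
theorem prod_layerBound_le (i : ℕ) :
    ∃ x₀ : ℝ, ∀ x : ℝ, x₀ < x →
      (∏ j ∈ Finset.Icc (i + 1) (logStar goldenRatioReal x), layerBound j x)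
        ≤ layerBound i x := by
  obtain ⟨A, hA⟩ := ((eventually_ge_atTop 1).and
    (eventually_mul_logb_sq_le goldenRatioReal 1)).exists_forall_of_atTop
  have hbound := (tendsto_layerBound_atTop i).eventually
    (((tendsto_logb_atTop one_lt_goldenRatio).eventually_ge_atTop 1).and
      (eventually_mul_logb_sq_le goldenRatioReal (A ^ (A / (1 / 100)))))
  have hA1 : 1 ≤ A := (hA A le_rfl).1
  obtain ⟨x₀, hx₀⟩ := hbound.exists_forall_of_atTop
  refine ⟨x₀, fun x hx => ?_⟩
  obtain ⟨hlog, hz⟩ := hx₀ x hx.le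
  have hstep : layerBound (i + 1) x = logb goldenRatioReal (layerBound i x) := max_eq_left hlog
  rw [prod_Icc_layerBound]
  calc _ ≤ potential A (1 / 100) (layerBound (i + 1) x) :=
        prod_range_layerBound_le_potential (by norm_num) hA1
          (fun y hy => logb_goldenRatio_le_sub hy) (fun y hy => by simpa using (hA y hy).2) _
          (le_max_right _ _)
    _ ≤ A ^ (A / (1 / 100)) * layerBound (i + 1) x ^ 2 :=
        potential_le_mul_sq (by norm_num) hA1 _
    _ ≤ layerBound i x := by rw [hstep]; exact hz
end
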